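/- Let K ⊆ ℝⁿ be a nonempty compact set, let a₁,…,a_m be real polynomials of degree at most d, and let b ∈ ℝᵐ. Let F be the set of all truncated multi-sequences y of degree d that admit a K-representing measure and satisfy ⟨aᵢ, y⟩ = bᵢ for i = 1,…,m. If y* is an extreme point of the convex set F, then y* admits a K-representing measure that is r-atomic with r ≤ m; that is, there exist r ≤ m distinct points u₁,…,u_r ∈ K and positive weights λ₁,…,λ_r > 0 such that y*_α = Σⱼ₌₁ʳ λⱼ uⱼ^α for every multi-index α with |α| ≤ d. -/

import Mathlib

/-!
Write `v x = (x^α)_{|α| ≤ d}` for the moment vector of the Dirac mass at `x`. The convex hull of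
the compact set `v '' K` is compact, so the normalised moment vector of a measure on `K` lies in it,
and Carathéodory's theorem writes `y* = ∑ λⱼ v(uⱼ)` with `λⱼ > 0`, `uⱼ ∈ K` and the `v(uⱼ)`
affinely independent; since every `v x` has degree-zero coordinate `1`, they are even linearly
independent. If `c` solves the homogeneous constraints `⟨aᵢ, ∑ cⱼ v(uⱼ)⟩ = 0`, then
`y* ± ε ∑ cⱼ v(uⱼ)` are moment vectors of nonnegative atomic measures lying in `F` for small `ε`,
so extremality of `y*` forces `∑ cⱼ v(uⱼ) = 0`, i.e. `c = 0`. Hence `c ↦ (⟨aᵢ, ∑ cⱼ v(uⱼ)⟩)ᵢ` is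
injective from `ℝʳ` to `ℝᵐ`, and `r ≤ m`.
-/

open MeasureTheory Set Filter Topology

section Caratheodory

variable {𝕜 E : Type*} [Field 𝕜] [LinearOrder 𝕜] [IsStrictOrderedRing 𝕜] [AddCommGroup E]
  [Module 𝕜 E] [FiniteDimensional 𝕜 E]

theorem convexHull_eq_iUnion_image_stdSimplex (s : Set E) :
    convexHull 𝕜 s = ⋃ k : Fin (Module.finrank 𝕜 E + 2),
      (fun p : (Fin k → 𝕜) × (Fin k → E) => ∑ i, p.1 i • p.2 i) ''
        (stdSimplex 𝕜 (Fin k) ×ˢ univ.pi fun _ => s) := by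
  apply Subset.antisymm
  · intro x hx
    obtain ⟨ι, _, z, w, hzs, hz, hw, hw1, rfl⟩ := eq_pos_convex_span_of_mem_convexHull hx
    let e := Fintype.equivFin ι
    refine mem_iUnion.2 ⟨⟨_, Nat.lt_succ_of_le
      (hz.card_le_finrank_succ.trans (Nat.succ_le_succ (Submodule.finrank_le _)))⟩,
      (w ∘ e.symm, z ∘ e.symm), ⟨⟨fun i => (hw _).le, ?_⟩, fun i _ => hzs ⟨_, rfl⟩⟩, ?_⟩
    · simpa [hw1] using e.symm.sum_comp w
    · exact e.symm.sum_comp fun i => w i • z i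
  · simp only [iUnion_subset_iff, image_subset_iff]
    rintro k ⟨w, z⟩ ⟨hw, hz⟩
    exact (convex_convexHull 𝕜 s).sum_mem (fun i _ => hw.1 i) hw.2
      fun i _ => subset_convexHull 𝕜 s (hz i (mem_univ i))

end Caratheodory

theorem IsCompact.convexHull {E : Type*} [NormedAddCommGroup E] [NormedSpace ℝ E]
    [FiniteDimensional ℝ E] {s : Set E} (hs : IsCompact s) : IsCompact (convexHull ℝ s) := by
  rw [convexHull_eq_iUnion_image_stdSimplex]
  exact isCompact_iUnion fun k => ((isCompact_stdSimplex ℝ _).prod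
    (isCompact_univ_pi fun _ => hs)).image (by fun_prop)

theorem exists_affineIndependent_sum_eq_integral {X E : Type*} [MeasurableSpace X]
    [TopologicalSpace X] [OpensMeasurableSpace X] [NormedAddCommGroup E] [NormedSpace ℝ E]
    [FiniteDimensional ℝ E] {μ : Measure X} [IsFiniteMeasure μ] {K : Set X} (hK : IsCompact K)
    (hμK : μ Kᶜ = 0) {f : X → E} (hf : Continuous f) :
    ∃ (r : ℕ) (u : Fin r → X) (w : Fin r → ℝ), (∀ j, u j ∈ K) ∧ (∀ j, 0 < w j) ∧
      AffineIndependent ℝ (f ∘ u) ∧ ∫ x, f x ∂μ = ∑ j, w j • f (u j) := by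
  rcases eq_or_ne μ 0 with rfl | hμ
  · exact ⟨0, Fin.elim0, Fin.elim0, fun j => j.elim0, fun j => j.elim0,
      affineIndependent_of_subsingleton ℝ _, by simp⟩
  have : NeZero μ := ⟨hμ⟩
  have hae : ∀ᵐ x ∂μ, x ∈ K := by simpa using measure_eq_zero_iff_ae_notMem.1 hμK
  obtain ⟨C, hC⟩ := hK.exists_bound_of_continuousOn hf.continuousOn
  have hmem : ⨍ x, f x ∂μ ∈ convexHull ℝ (f '' K) :=
    (convex_convexHull ℝ _).average_mem (hK.image hf).convexHull.isClosed
      (hae.mono fun x hx => subset_convexHull ℝ _ (mem_image_of_mem f hx))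
      (.of_bound hf.aestronglyMeasurable C (hae.mono hC))
  obtain ⟨ι, _, z, w, hzK, hz, hw, -, hsum⟩ := eq_pos_convex_span_of_mem_convexHull hmem
  choose u huK hu using fun i => hzK (mem_range_self i)
  obtain rfl : f ∘ u = z := funext hu
  let e := (Fintype.equivFin ι).symm
  refine ⟨Fintype.card ι, u ∘ e, fun j => μ.real univ * w (e j), fun j => huK _,
    fun j => mul_pos measureReal_univ_pos (hw _), hz.comp_embedding e.toEmbedding, ?_⟩
  rw [← measure_smul_average, ← hsum, Finset.smul_sum, ← e.sum_comp]
  simp [mul_smul]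

theorem AffineIndependent.linearIndependent_of_forall_apply_eq_one {k E ι : Type*} [Ring k]
    [AddCommGroup E] [Module k E] {v : ι → E} (hv : AffineIndependent k v) (φ : E →ₗ[k] k)
    (hφ : ∀ i, φ (v i) = 1) : LinearIndependent k v := by
  refine linearIndependent_iff'.2 fun s g hg i hi => affineIndependent_iff.1 hv s g ?_ hg i hi
  simpa [hφ] using congrArg φ hg

section ExtremePoints

variable {E G ι : Type*} [AddCommGroup E] [Module ℝ E] [AddCommGroup G] [Module ℝ G] [Fintype ι]
  {F : Set E} {L : E →ₗ[ℝ] G} {b : G} {v : ι → E} {w : ι → ℝ}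

theorem sum_smul_eq_zero_of_mem_extremePoints (hw : ∀ i, 0 < w i)
    (hF : ∀ c : ι → ℝ, (∀ i, 0 ≤ c i) → L (∑ i, c i • v i) = b → ∑ i, c i • v i ∈ F)
    (hy : ∑ i, w i • v i ∈ F.extremePoints ℝ) (hyb : L (∑ i, w i • v i) = b)
    {c : ι → ℝ} (hc : L (∑ i, c i • v i) = 0) : ∑ i, c i • v i = 0 := by
  set y := ∑ i, w i • v i
  set z := ∑ i, c i • v i
  have hperturb : ∀ t : ℝ, (∀ i, 0 ≤ w i + t * c i) → y + t • z ∈ F := fun t ht => by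
    have h := hF (fun i => w i + t * c i) ht
    simp only [add_smul, mul_smul, Finset.sum_add_distrib, ← Finset.smul_sum] at h
    exact h (by simp [y, z, hyb, hc])
  have hsmall : ∀ᶠ t in 𝓝 (0 : ℝ), ∀ i, 0 ≤ w i + t * c i := eventually_all.2 fun i =>
    ((((by fun_prop : Continuous fun t : ℝ => w i + t * c i).tendsto 0).eventually_const_lt
      (by simpa using hw i))).mono fun _ => le_of_lt
  obtain ⟨δ, hδ, hδP⟩ := Metric.eventually_nhds_iff.1 hsmall
  have hhalf : |δ| / 2 < δ := by rw [abs_of_pos hδ]; linarith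
  have hseg : y ∈ openSegment ℝ (y + (δ / 2) • z) (y + (-(δ / 2)) • z) :=
    ⟨1 / 2, 1 / 2, by norm_num, by norm_num, by norm_num, by module⟩
  simpa [hδ.ne'] using
    hy.2 (hperturb _ (hδP (by simpa using hhalf))) (hperturb _ (hδP (by simpa using hhalf))) hseg

theorem card_le_finrank_of_mem_extremePoints [FiniteDimensional ℝ G] (hv : LinearIndependent ℝ v)
    (hw : ∀ i, 0 < w i)
    (hF : ∀ c : ι → ℝ, (∀ i, 0 ≤ c i) → L (∑ i, c i • v i) = b → ∑ i, c i • v i ∈ F)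
    (hy : ∑ i, w i • v i ∈ F.extremePoints ℝ) (hyb : L (∑ i, w i • v i) = b) :
    Fintype.card ι ≤ Module.finrank ℝ G := by
  have hinj : Function.Injective (L ∘ₗ Fintype.linearCombination ℝ v) := by
    refine (injective_iff_map_eq_zero _).2 fun c hc => funext <|
      Fintype.linearIndependent_iff.1 hv c (sum_smul_eq_zero_of_mem_extremePoints hw hF hy hyb ?_)
    simpa [Fintype.linearCombination_apply] using hc
  simpa using LinearMap.finrank_le_finrank_of_injective hinj

end ExtremePoints

section Dirac

variable {X ι : Type*} [MeasurableSpace X] [Fintype ι] (u : ι → X)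

theorem isFiniteMeasure_sum_smul_dirac (c : ι → ℝ) :
    IsFiniteMeasure (∑ i, ENNReal.ofReal (c i) • Measure.dirac (u i)) :=
  ⟨by simp [ENNReal.sum_lt_top]⟩

variable [MeasurableSingletonClass X]

theorem integrable_sum_smul_dirac (c : ι → ℝ) (g : X → ℝ) :
    Integrable g (∑ i, ENNReal.ofReal (c i) • Measure.dirac (u i)) :=
  integrable_finsetSum_measure.2 fun _ _ =>
    (integrable_dirac enorm_lt_top).smul_measure ENNReal.ofReal_ne_top

theorem integral_sum_smul_dirac {c : ι → ℝ} (hc : ∀ i, 0 ≤ c i) (g : X → ℝ) :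
    ∫ x, g x ∂(∑ i, ENNReal.ofReal (c i) • Measure.dirac (u i)) = ∑ i, c i * g (u i) := by
  rw [integral_finsetSum_measure fun _ _ =>
    (integrable_dirac enorm_lt_top).smul_measure ENNReal.ofReal_ne_top]
  simp [hc]

theorem sum_smul_dirac_compl_eq_zero {K : Set X} (hu : ∀ i, u i ∈ K) (c : ι → ℝ) :
    (∑ i, ENNReal.ofReal (c i) • Measure.dirac (u i)) Kᶜ = 0 := by
  simp [Measure.dirac_apply, hu]

end Dirac

instance finite_subtype_sum_le (n d : ℕ) : Finite {α : Fin n →₀ ℕ // (∑ i, α i) ≤ d} :=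
  Set.Finite.to_subtype <| (Set.finite_Iic (Finsupp.equivFunOnFinite.symm fun _ => d)).subset
    fun α hα i => (Finset.single_le_sum (fun j _ => Nat.zero_le (α j)) (Finset.mem_univ i)).trans hα

def monomialVector {n : ℕ} (d : ℕ) (x : Fin n → ℝ) : {α : Fin n →₀ ℕ // (∑ i, α i) ≤ d} → ℝ :=
  fun α => ∏ i, x i ^ α.1 i

theorem continuous_monomialVector (n d : ℕ) : Continuous (monomialVector (n := n) d) := by
  unfold monomialVector; fun_prop

/-- The pairing `⟨p, y⟩`; monomials of `p` of degree above `d` are silently dropped. -/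
def truncPairing {n : ℕ} (d : ℕ) (p : MvPolynomial (Fin n) ℝ) :
    ({α : Fin n →₀ ℕ // (∑ i, α i) ≤ d} → ℝ) →ₗ[ℝ] ℝ where
  toFun y := ∑ α ∈ p.support, if h : (∑ i, α i) ≤ d then p.coeff α * y ⟨α, h⟩ else 0
  map_add' y z := by
    rw [← Finset.sum_add_distrib]
    exact Finset.sum_congr rfl fun α _ => by split_ifs <;> simp [mul_add]
  map_smul' t y := by
    rw [RingHom.id_apply, Finset.smul_sum]
    exact Finset.sum_congr rfl fun α _ => by split_ifs <;> simp [mul_left_comm]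

theorem stmt_2_general (n m d : ℕ) (K : Set (Fin n → ℝ)) (hK : IsCompact K)
    (a : Fin m → MvPolynomial (Fin n) ℝ)
    (b : Fin m → ℝ)
    (F : Set ({α : Fin n →₀ ℕ // (∑ i, α i) ≤ d} → ℝ))
    (hF : F = {y | (∃ μ : Measure (Fin n → ℝ), IsFiniteMeasure μ ∧ μ Kᶜ = 0 ∧
        ∀ α : {α : Fin n →₀ ℕ // (∑ i, α i) ≤ d},
          Integrable (fun x => ∏ i, x i ^ α.1 i) μ ∧
          y α = ∫ x, ∏ i, x i ^ α.1 i ∂μ) ∧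
      (∀ j : Fin m, (∑ α ∈ (a j).support, if h : (∑ i, α i) ≤ d
          then (a j).coeff α * y ⟨α, h⟩ else 0) = b j)})
    (ystar : {α : Fin n →₀ ℕ // (∑ i, α i) ≤ d} → ℝ)
    (hy : ystar ∈ F.extremePoints ℝ) :
    ∃ r : ℕ, r ≤ m ∧ ∃ (u : Fin r → (Fin n → ℝ)) (lam : Fin r → ℝ),
      Function.Injective u ∧ (∀ j, u j ∈ K) ∧ (∀ j, 0 < lam j) ∧
      ∀ α : {α : Fin n →₀ ℕ // (∑ i, α i) ≤ d},
        ystar α = ∑ j, lam j * ∏ i, (u j) i ^ α.1 i := by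
  subst hF
  have := Fintype.ofFinite {α : Fin n →₀ ℕ // (∑ i, α i) ≤ d}
  obtain ⟨⟨μ, _, hμK, hmom⟩, hconstr⟩ := hy.1
  obtain ⟨r, u, w, huK, hw, hind, hint⟩ :=
    exists_affineIndependent_sum_eq_integral hK hμK (continuous_monomialVector n d)
  obtain rfl : ystar = ∑ j, w j • monomialVector d (u j) := by
    rw [← hint]
    ext α
    rw [eval_integral (f := monomialVector d) fun α => (hmom α).1]
    exact (hmom α).2
  refine ⟨r, ?_, u, w, hind.injective.of_comp, huK, hw, fun α => by simp [monomialVector]⟩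
  have hlin := hind.linearIndependent_of_forall_apply_eq_one
    (LinearMap.proj ⟨0, by simp⟩) fun j => by simp [monomialVector]
  simpa using card_le_finrank_of_mem_extremePoints
    (L := LinearMap.pi fun j => truncPairing d (a j)) hlin hw (fun c hc hcb => mem_ofPred_eq ▸
      ⟨⟨_, isFiniteMeasure_sum_smul_dirac u c, sum_smul_dirac_compl_eq_zero u huK c,
        fun α => ⟨integrable_sum_smul_dirac u c _,
          by simp [integral_sum_smul_dirac u hc, monomialVector]⟩⟩, funext_iff.1 hcb⟩)
    hy (funext hconstr)

theorem stmt_2 (n m d : ℕ) (K : Set (Fin n → ℝ)) (hKne : K.Nonempty) (hK : IsCompact K)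
    (a : Fin m → MvPolynomial (Fin n) ℝ) (ha : ∀ j, (a j).totalDegree ≤ d)
    (b : Fin m → ℝ)
    (F : Set ({α : Fin n →₀ ℕ // (∑ i, α i) ≤ d} → ℝ))
    (hF : F = {y | (∃ μ : Measure (Fin n → ℝ), IsFiniteMeasure μ ∧ μ Kᶜ = 0 ∧
        ∀ α : {α : Fin n →₀ ℕ // (∑ i, α i) ≤ d},
          Integrable (fun x => ∏ i, x i ^ α.1 i) μ ∧
          y α = ∫ x, ∏ i, x i ^ α.1 i ∂μ) ∧
      (∀ j : Fin m, (∑ α ∈ (a j).support, if h : (∑ i, α i) ≤ d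
          then (a j).coeff α * y ⟨α, h⟩ else 0) = b j)})
    (ystar : {α : Fin n →₀ ℕ // (∑ i, α i) ≤ d} → ℝ)
    (hy : ystar ∈ F.extremePoints ℝ) :
    ∃ r : ℕ, r ≤ m ∧ ∃ (u : Fin r → (Fin n → ℝ)) (lam : Fin r → ℝ),
      Function.Injective u ∧ (∀ j, u j ∈ K) ∧ (∀ j, 0 < lam j) ∧
      ∀ α : {α : Fin n →₀ ℕ // (∑ i, α i) ≤ d},
        ystar α = ∑ j, lam j * ∏ i, (u j) i ^ α.1 i :=
  stmt_2_general n m d K hK a b F hF ystar hy
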